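/- In the chain complex of a grid diagram, the canonical generator x₊(G), consisting of the upper-right corners of all cells containing an X, is a cycle: there is no empty rectangle with positive local multiplicities starting at x₊(G) avoiding all X-markings, hence ∂₀⁻ x₊(G) = 0. -/
import Mathlib


/-- The canonical generator `x₊(G)` of the grid complex on the toroidal grid
with X-markings recorded by `σX : ℤ/k → ℤ/k` (column `c` carries an X in cell
`(c, σX c)`): it assigns to the vertical circle `c` the horizontal circle
through the upper-right corner of the X in column `c - 1`. -/
def xPlus (k : ℕ) (σX : Equiv.Perm (ZMod k)) : ZMod k → ZMod k :=
  fun c => σX (c - 1) + 1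

/-- Membership of `t` in the half-open cyclic interval `[a, b)` in `ℤ/k`. -/
def cycIco (k : ℕ) (a b t : ZMod k) : Prop := (t - a).val < (b - a).val

lemma val_sub_one_lt {k : ℕ} [NeZero k] (x : ZMod k) (hx : x ≠ 0) :
    (x - 1).val < x.val := by
  have h1 : 1 ≤ x.val := Nat.one_le_iff_ne_zero.mpr (by
    intro h; exact hx (by rwa [← ZMod.val_eq_zero]))
  have hx' : x = ((x.val : ℕ) : ZMod k) := (by simp [ZMod.natCast_val, ZMod.cast_id])
  have : x - 1 = ((x.val - 1 : ℕ) : ZMod k) := by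
    rw [Nat.cast_sub h1, Nat.cast_one, ← hx']
  rw [this, ZMod.val_cast_of_lt (lt_of_le_of_lt (Nat.sub_le _ _) (ZMod.val_lt x))]
  omega

/-- `x₊(G)` is a cycle in the grid complex: any rectangle
starting at `x₊(G)` (with corner columns `i ≠ j`, its lower-left and
upper-right corners at the points `(i, x₊ i)`, `(j, x₊ j)` of `x₊`, so its
domain consists of the cells in `[i,j) × [x₊ i, x₊ j)`) contains the X-marking
of some column in its domain.  Hence no empty rectangle avoiding all
X-markings leaves `x₊(G)`, and `∂₀⁻ x₊(G) = 0`: the coefficient of every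
generator `y` in the differential of `x₊(G)` vanishes. -/
theorem xPlus_is_cycle (k : ℕ) [NeZero k] (σX : Equiv.Perm (ZMod k))
    (i j : ZMod k) (hij : i ≠ j) :
    ∃ c : ZMod k,
      cycIco k i j c ∧
      cycIco k (xPlus k σX i) (xPlus k σX j) (σX c) := by
  refine ⟨j - 1, ?_, ?_⟩
  · have h : j - 1 - i = (j - i) - 1 := by ring
    unfold cycIco
    rw [h]
    exact val_sub_one_lt _ (sub_ne_zero.mpr (Ne.symm hij))
  · unfold cycIco xPlus
    have h2 : σX (j - 1) - σX (i - 1) ≠ 0 := by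
      intro h
      have := σX.injective (sub_eq_zero.mp h)
      exact hij (sub_left_inj.mp this.symm)
    have e1 : σX (j - 1) - (σX (i - 1) + 1) = (σX (j - 1) - σX (i - 1)) - 1 := by ring
    have e2 : σX (j - 1) + 1 - (σX (i - 1) + 1) = σX (j - 1) - σX (i - 1) := by ring
    rw [e1, e2]
    exact val_sub_one_lt _ h2
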